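/- Suppose the Zygmund-type inequality holds: u*(t) ≤ (1/√(4π))√(4π/T + log(T/t))·√(‖∇u‖₂² + ‖u‖₂²) for all u ∈ H¹(ℝ²), T > 0, t ∈ (0,T]. Then there exists C > 0 such that for every β < 4π and every u ∈ H¹(ℝ²) with ‖∇u‖₂ ≤ 1, ∫_{ℝ²}(e^{βu²} − 1) dx ≤ (C/(1 − β/(4π))²)·‖u‖₂². -/

import Mathlib

/-!
Dilating `u ↦ u (c • ·)` keeps `‖∇u‖₂` and divides both `∫ (e^{βu²} - 1)` and `‖u‖₂²` by `c²`,
so it suffices to treat `‖u‖₂² = k := (1 - β/4π)/4`. Then `E := ‖u‖²_{H¹} ≤ 1 + k`, and the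
Zygmund inequality with `T = 1` and `t = e^{4π - 4π(w² - 1)/E}` gives `u*(t) ≤ √(w² - 1) < w`,
i.e. `|{|u| > w}| ≤ t` for `w ≥ 2`. In the layer-cake formula
`∫ (e^{βu²} - 1) = ∫₀^∞ |{|u| > w}| 2βw e^{βw²} dw` the range `w ≤ 2` contributes at most
`β e^{4β} ‖u‖₂² = O(k)`, and the range `w ≥ 2` is a Gaussian tail of rate `4π/E - β ≥ 2πk`,
hence `O(1/k)`. Undoing the dilation multiplies by `c² = ‖u‖₂²/k`, whence the factor `1/k²`.
-/

open MeasureTheory Real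

/-- The decreasing rearrangement of a function on `ℝ²`. -/
noncomputable def decRearr (u : EuclideanSpace ℝ (Fin 2) → ℝ) (t : ℝ) : ℝ :=
  sInf {s : ℝ | 0 ≤ s ∧ volume {x : EuclideanSpace ℝ (Fin 2) | s < |u x|} ≤ ENNReal.ofReal t}

/-- Membership in `H¹(ℝ²)`. -/
def MemH1 (u : EuclideanSpace ℝ (Fin 2) → ℝ) : Prop :=
  Differentiable ℝ u ∧ MemLp u 2 (volume : Measure (EuclideanSpace ℝ (Fin 2))) ∧
    MemLp (fun x => fderiv ℝ u x) 2 (volume : Measure (EuclideanSpace ℝ (Fin 2)))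

open Set Filter Topology

lemma lintegral_Ioi_two_mul_exp_neg_mul_sq {c : ℝ} (hc : 0 < c) {s : ℝ} (hs : 0 ≤ s) :
    ∫⁻ t in Ioi s, ENNReal.ofReal (2 * t * exp (-(c * t ^ 2))) =
      ENNReal.ofReal (exp (-(c * s ^ 2)) / c) := by
  have hderiv : ∀ t ∈ Ici s, HasDerivAt (fun t => -exp (-(c * t ^ 2)) / c)
      (2 * t * exp (-(c * t ^ 2))) t := fun t _ => by
    refine (((hasDerivAt_pow 2 t).const_mul c).fun_neg.exp.fun_neg.div_const c).congr_deriv ?_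
    field_simp
    norm_num [mul_comm]
  have hnonneg : ∀ t ∈ Ioi s, 0 ≤ 2 * t * exp (-(c * t ^ 2)) := fun t ht => by
    have := hs.trans_lt ht
    positivity
  have hlim : Tendsto (fun t => -exp (-(c * t ^ 2)) / c) atTop (𝓝 0) := by
    simpa using ((tendsto_exp_atBot.comp (tendsto_neg_atTop_atBot.comp
      ((tendsto_pow_atTop two_ne_zero).const_mul_atTop hc))).neg).div_const c
  rw [← ofReal_integral_eq_lintegral_ofReal
      (integrableOn_Ioi_deriv_of_nonneg' hderiv hnonneg hlim)
      ((ae_restrict_mem measurableSet_Ioi).mono hnonneg),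
    integral_Ioi_of_hasDerivAt_of_nonneg' hderiv hnonneg hlim]
  ring_nf

section LayerCake

variable {α : Type*} [MeasurableSpace α] (μ : Measure α) {f : α → ℝ}

lemma lintegral_ofReal_comp_abs_eq_lintegral_meas_lt_mul {g G : ℝ → ℝ} (hf : AEMeasurable f μ)
    (hg : Continuous g) (hg_nonneg : ∀ t, 0 < t → 0 ≤ g t)
    (hG : ∀ a, ∫ t in (0 : ℝ)..a, g t = G a) :
    ∫⁻ x, ENNReal.ofReal (G |f x|) ∂μ =
      ∫⁻ t in Ioi 0, μ {x | t < |f x|} * ENNReal.ofReal (g t) := by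
  simp only [← hG]
  exact lintegral_comp_eq_lintegral_meas_lt_mul μ (ae_of_all _ fun x => abs_nonneg (f x))
    hf.abs (fun t _ => hg.intervalIntegrable _ _)
    ((ae_restrict_mem measurableSet_Ioi).mono fun t ht => hg_nonneg t ht)

lemma lintegral_ofReal_sq_eq_lintegral_meas_lt_mul (hf : AEMeasurable f μ) :
    ∫⁻ x, ENNReal.ofReal (f x ^ 2) ∂μ =
      ∫⁻ t in Ioi 0, μ {x | t < |f x|} * ENNReal.ofReal (2 * t) := by
  simp_rw [← sq_abs (f _)]
  refine lintegral_ofReal_comp_abs_eq_lintegral_meas_lt_mul μ hf (g := fun t => 2 * t)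
    (G := fun a => a ^ 2) (by fun_prop) (fun t ht => by positivity) fun a => ?_
  rw [intervalIntegral.integral_const_mul, integral_id]
  ring

lemma lintegral_ofReal_exp_mul_sq_sub_one_eq_lintegral_meas_lt_mul (hf : AEMeasurable f μ)
    {β : ℝ} (hβ : 0 ≤ β) :
    ∫⁻ x, ENNReal.ofReal (exp (β * f x ^ 2) - 1) ∂μ =
      ∫⁻ t in Ioi 0, μ {x | t < |f x|} * ENNReal.ofReal (2 * β * t * exp (β * t ^ 2)) := by
  simp_rw [← sq_abs (f _)]
  refine lintegral_ofReal_comp_abs_eq_lintegral_meas_lt_mul μ hf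
    (g := fun t => 2 * β * t * exp (β * t ^ 2)) (G := fun a => exp (β * a ^ 2) - 1)
    (by fun_prop) (fun t ht => by positivity) fun a => ?_
  have hderiv : ∀ s ∈ uIcc 0 a,
      HasDerivAt (fun s => exp (β * s ^ 2)) (2 * β * s * exp (β * s ^ 2)) s := fun s _ => by
    convert ((hasDerivAt_pow 2 s).const_mul β).exp using 1
    ring
  rw [intervalIntegral.integral_eq_sub_of_hasDerivAt hderiv
    ((by fun_prop : Continuous _).intervalIntegrable _ _)]
  simp

lemma setLIntegral_Ioc_meas_lt_mul_exp_le (hf : AEMeasurable f μ) {β : ℝ} (hβ : 0 ≤ β)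
    (a : ℝ) :
    ∫⁻ t in Ioc 0 a, μ {x | t < |f x|} * ENNReal.ofReal (2 * β * t * exp (β * t ^ 2)) ≤
      ENNReal.ofReal (β * exp (β * a ^ 2)) * ∫⁻ x, ENNReal.ofReal (f x ^ 2) ∂μ := by
  rw [lintegral_ofReal_sq_eq_lintegral_meas_lt_mul μ hf,
    ← lintegral_const_mul' _ _ ENNReal.ofReal_ne_top]
  refine (setLIntegral_mono' measurableSet_Ioc fun t ht => ?_).trans
    (lintegral_mono_set Ioc_subset_Ioi_self)
  obtain ⟨ht0, hta⟩ := ht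
  calc μ {x | t < |f x|} * ENNReal.ofReal (2 * β * t * exp (β * t ^ 2))
      ≤ μ {x | t < |f x|} * ENNReal.ofReal (2 * β * t * exp (β * a ^ 2)) := by
        have : 0 ≤ 2 * β * t := by positivity
        gcongr
    _ = ENNReal.ofReal (β * exp (β * a ^ 2)) * (μ {x | t < |f x|} * ENNReal.ofReal (2 * t)) := by
        rw [mul_left_comm, ← ENNReal.ofReal_mul (by positivity)]
        ring_nf

lemma setLIntegral_Ioi_meas_lt_mul_exp_le {β a b s : ℝ} (hβ : 0 ≤ β) (hb : β < b) (hs : 0 ≤ s)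
    (htail : ∀ t, s ≤ t → μ {x | t < |f x|} ≤ ENNReal.ofReal (exp (a - b * t ^ 2))) :
    ∫⁻ t in Ioi s, μ {x | t < |f x|} * ENNReal.ofReal (2 * β * t * exp (β * t ^ 2)) ≤
      ENNReal.ofReal (β * exp (a - (b - β) * s ^ 2) / (b - β)) := by
  have hexp (t : ℝ) :
      exp (a - b * t ^ 2) * exp (β * t ^ 2) = exp a * exp (-((b - β) * t ^ 2)) := by
    rw [← exp_add, ← exp_add]
    ring_nf
  calc ∫⁻ t in Ioi s, μ {x | t < |f x|} * ENNReal.ofReal (2 * β * t * exp (β * t ^ 2))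
      ≤ ∫⁻ t in Ioi s, ENNReal.ofReal (β * exp a) *
          ENNReal.ofReal (2 * t * exp (-((b - β) * t ^ 2))) := by
        refine setLIntegral_mono' measurableSet_Ioi fun t ht => ?_
        have ht0 : 0 ≤ t := hs.trans ht.le
        calc μ {x | t < |f x|} * ENNReal.ofReal (2 * β * t * exp (β * t ^ 2))
            ≤ ENNReal.ofReal (exp (a - b * t ^ 2)) *
                ENNReal.ofReal (2 * β * t * exp (β * t ^ 2)) := by
              gcongr
              exact htail t ht.le
          _ = _ := by
              rw [← ENNReal.ofReal_mul (exp_nonneg _), ← ENNReal.ofReal_mul (by positivity)]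
              congr 1
              linear_combination (2 * β * t) * hexp t
    _ = ENNReal.ofReal (β * exp a) * ENNReal.ofReal (exp (-((b - β) * s ^ 2)) / (b - β)) := by
        rw [lintegral_const_mul' _ _ ENNReal.ofReal_ne_top,
          lintegral_Ioi_two_mul_exp_neg_mul_sq (sub_pos.2 hb) hs]
    _ = ENNReal.ofReal (β * exp (a - (b - β) * s ^ 2) / (b - β)) := by
        rw [← ENNReal.ofReal_mul (by positivity), sub_eq_add_neg a, exp_add]
        ring_nf

end LayerCake

lemma tendsto_measure_lt_abs_atTop_zero {α : Type*} [MeasurableSpace α] {μ : Measure α}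
    {f : α → ℝ} {p : ENNReal} (hf : MemLp f p μ) (hp0 : p ≠ 0) (hp : p ≠ ⊤) :
    Tendsto (fun s : ℝ => μ {x | s < |f x|}) atTop (𝓝 0) := by
  have hanti : Antitone fun s : ℝ => {x | s < |f x|} := fun s r hsr x hx => hsr.trans_lt hx
  have hfin : μ {x | 1 < |f x|} ≠ ⊤ := by
    refine ((measure_mono fun x (hx : 1 < |f x|) => ?_).trans_lt
      (hf.meas_ge_lt_top hp0 hp one_ne_zero)).ne
    change (1 : NNReal) ≤ ‖f x‖₊
    rw [← NNReal.coe_le_coe, coe_nnnorm]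
    exact hx.le
  have hempty : (⋂ s : ℝ, {x | s < |f x|}) = ∅ :=
    eq_empty_of_forall_notMem fun x hx => lt_irrefl |f x| (mem_iInter.1 hx |f x|)
  simpa [hempty, Function.comp_def] using tendsto_measure_iInter_atTop
    (fun s => nullMeasurableSet_lt aemeasurable_const hf.1.aemeasurable.abs) hanti ⟨1, hfin⟩

lemma volume_lt_abs_le_of_decRearr_lt {v : EuclideanSpace ℝ (Fin 2) → ℝ} (hv : MemLp v 2 volume)
    {t w : ℝ} (ht : 0 < t) (h : decRearr v t < w) :
    volume {x | w < |v x|} ≤ ENNReal.ofReal t := by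
  obtain ⟨s, hst, hs0⟩ := ((tendsto_measure_lt_abs_atTop_zero hv two_ne_zero ENNReal.ofNat_ne_top
    |>.eventually (gt_mem_nhds (ENNReal.ofReal_pos.2 ht))).and (eventually_ge_atTop 0)).exists
  have hne : {s : ℝ | 0 ≤ s ∧ volume {x | s < |v x|} ≤ ENNReal.ofReal t}.Nonempty :=
    ⟨s, hs0, hst.le⟩
  obtain ⟨r, ⟨-, hr⟩, hrw⟩ := exists_lt_of_csInf_lt hne h
  exact (measure_mono fun x (hx : w < |v x|) => hrw.trans hx).trans hr

lemma memLp_two_comp_smul {E F : Type*} [NormedAddCommGroup E] [NormedSpace ℝ E]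
    [MeasurableSpace E] [BorelSpace E] [FiniteDimensional ℝ E] {μ : Measure E}
    [μ.IsAddHaarMeasure] [NormedAddCommGroup F] {f : E → F} (hf : MemLp f 2 μ) {c : ℝ}
    (hc : c ≠ 0) : MemLp (fun x => f (c • x)) 2 μ := by
  refine (memLp_two_iff_integrable_sq_norm
    (hf.1.comp_quasiMeasurePreserving (Measure.quasiMeasurePreserving_smul μ hc))).2 ?_
  exact (integrable_comp_smul_iff μ (fun y => ‖f y‖ ^ 2) hc).2
    ((memLp_two_iff_integrable_sq_norm hf.1).1 hf)

lemma integral_comp_smul_eq_inv_sq_mul (f : EuclideanSpace ℝ (Fin 2) → ℝ) (c : ℝ) :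
    ∫ x, f (c • x) = (c ^ 2)⁻¹ * ∫ x, f x := by
  rw [Measure.integral_comp_smul, finrank_euclideanSpace_fin, abs_of_nonneg (by positivity),
    smul_eq_mul]

lemma MemH1.comp_smul {u : EuclideanSpace ℝ (Fin 2) → ℝ} (hu : MemH1 u) {c : ℝ} (hc : c ≠ 0) :
    MemH1 (fun x => u (c • x)) := by
  refine ⟨hu.1.comp (differentiable_id.const_smul c), memLp_two_comp_smul hu.2.1 hc, ?_⟩
  simp_rw [fderiv_comp_smul]
  exact (memLp_two_comp_smul hu.2.2 hc).const_smul c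

lemma integral_norm_fderiv_comp_smul_sq (u : EuclideanSpace ℝ (Fin 2) → ℝ) {c : ℝ} (hc : c ≠ 0) :
    ∫ x, ‖fderiv ℝ (fun y => u (c • y)) x‖ ^ 2 = ∫ x, ‖fderiv ℝ u x‖ ^ 2 := by
  simp_rw [fderiv_comp_smul, norm_smul, mul_pow, Real.norm_eq_abs, sq_abs]
  rw [integral_const_mul, integral_comp_smul_eq_inv_sq_mul (fun y => ‖fderiv ℝ u y‖ ^ 2),
    mul_inv_cancel_left₀ (pow_ne_zero 2 hc)]

noncomputable def h1NormSq (u : EuclideanSpace ℝ (Fin 2) → ℝ) : ℝ :=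
  (∫ x, ‖fderiv ℝ u x‖ ^ 2) + ∫ x, u x ^ 2

def ZygmundInequality : Prop :=
  ∀ u : EuclideanSpace ℝ (Fin 2) → ℝ, MemH1 u → ∀ T : ℝ, 0 < T → ∀ t : ℝ, 0 < t → t ≤ T →
    decRearr u t ≤ (1 / √(4 * π)) * √(4 * π / T + log (T / t)) * √(h1NormSq u)

lemma volume_lt_abs_le_of_zygmund (hZ : ZygmundInequality) {v : EuclideanSpace ℝ (Fin 2) → ℝ}
    (hv : MemH1 v) (hE : 0 < h1NormSq v) {w : ℝ} (hw0 : 0 ≤ w) (hw : 1 + h1NormSq v ≤ w ^ 2) :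
    volume {x | w < |v x|} ≤
      ENNReal.ofReal (exp (4 * π - 4 * π * (w ^ 2 - 1) / h1NormSq v)) := by
  set E := h1NormSq v
  have hw1 : 0 ≤ w ^ 2 - 1 := by linarith
  have hlevel : 4 * π ≤ 4 * π * (w ^ 2 - 1) / E := by
    rw [le_div_iff₀ hE]
    nlinarith [pi_pos]
  have hbound : 1 / √(4 * π) * √(4 * π / 1 + log (1 / exp (4 * π - 4 * π * (w ^ 2 - 1) / E))) *
      √E = √(w ^ 2 - 1) := by
    rw [one_div (exp _), log_inv, log_exp, div_one,
      show 4 * π + -(4 * π - 4 * π * (w ^ 2 - 1) / E) = 4 * π * (w ^ 2 - 1) / E by ring,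
      mul_assoc, ← sqrt_mul (by positivity), div_mul_cancel₀ _ hE.ne',
      sqrt_mul (by positivity : (0 : ℝ) ≤ 4 * π) (w ^ 2 - 1),
      one_div, inv_mul_cancel_left₀ (by positivity)]
  refine volume_lt_abs_le_of_decRearr_lt hv.2.1 (exp_pos _)
    ((hZ v hv 1 one_pos _ (exp_pos _) (exp_le_one_iff.2 (by linarith))).trans_lt ?_)
  rw [hbound, sqrt_lt' (by nlinarith)]
  linarith

lemma near_add_tail_le {k β E : ℝ} (hk : 0 < k) (hβ0 : 0 ≤ β) (hβ : β ≤ 4 * π * (1 - 4 * k))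
    (hE0 : 0 < E) (hE : E ≤ 1 + k) :
    β * exp (β * 2 ^ 2) * k +
        β * exp (4 * π * (1 + 1 / E) - (4 * π / E - β) * 2 ^ 2) / (4 * π / E - β) ≤
      8 * π * exp (20 * π) / k := by
  have hπ := pi_pos
  have hk1 : k ≤ 1 / 4 := by nlinarith
  have hβ4 : β ≤ 4 * π := by nlinarith
  have hgap : 2 * π * k ≤ 4 * π / E - β := by
    have h1 : 4 * π / (1 + k) ≤ 4 * π / E := div_le_div_of_nonneg_left (by positivity) hE0 hE
    have h2 : 2 * π * k + β ≤ 4 * π / (1 + k) := by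
      rw [le_div_iff₀ (by positivity)]
      nlinarith [mul_le_mul_of_nonneg_right hβ (by linarith : (0 : ℝ) ≤ 1 + k), mul_pos hπ hk,
        mul_pos (mul_pos hπ hk) hk]
    linarith
  have hnear : β * exp (β * 2 ^ 2) * k ≤ 4 * π * exp (20 * π) / k := by
    have h1 : β * exp (β * 2 ^ 2) ≤ 4 * π * exp (20 * π) :=
      mul_le_mul hβ4 (exp_le_exp.2 (by linarith)) (exp_pos _).le (by positivity)
    have h2 : k * k ≤ 1 := by nlinarith
    rw [le_div_iff₀ hk, mul_assoc]
    nlinarith [mul_le_mul h1 h2 (by positivity) (by positivity)]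
  have htail : β * exp (4 * π * (1 + 1 / E) - (4 * π / E - β) * 2 ^ 2) / (4 * π / E - β) ≤
      4 * π * exp (20 * π) / k := by
    refine (div_le_div₀ (by positivity) ?_ (by positivity) hgap).trans
      (div_le_div_of_nonneg_left (by positivity) hk (by nlinarith [pi_gt_three]))
    have : 0 ≤ 12 * π / E := by positivity
    gcongr
    linear_combination this + 4 * hβ4
  linarith [show 8 * π * exp (20 * π) / k = 4 * π * exp (20 * π) / k + 4 * π * exp (20 * π) / k by
    ring]

theorem integral_exp_mul_sq_sub_one_le_of_zygmund (hZ : ZygmundInequality)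
    {v : EuclideanSpace ℝ (Fin 2) → ℝ} (hv : MemH1 v) (hD : ∫ x, ‖fderiv ℝ v x‖ ^ 2 ≤ 1)
    {k β : ℝ} (hk : 0 < k) (hv2 : ∫ x, v x ^ 2 = k) (hβ0 : 0 ≤ β)
    (hβ : β ≤ 4 * π * (1 - 4 * k)) :
    ∫ x, (exp (β * v x ^ 2) - 1) ≤ 8 * π * exp (20 * π) / k := by
  have hvc : Continuous v := hv.1.continuous
  have hk1 : k ≤ 1 / 4 := by nlinarith [pi_pos]
  have hE0 : 0 < h1NormSq v := by
    have : 0 ≤ ∫ x, ‖fderiv ℝ v x‖ ^ 2 := integral_nonneg fun x => by positivity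
    rw [h1NormSq, hv2]
    linarith
  have hE1 : h1NormSq v ≤ 1 + k := by rw [h1NormSq, hv2]; linarith
  have hgap : β < 4 * π / h1NormSq v := by
    rw [lt_div_iff₀ hE0]
    nlinarith [mul_le_mul hβ hE1 hE0.le (hβ0.trans hβ), pi_pos, mul_pos pi_pos hk]
  have hnear := setLIntegral_Ioc_meas_lt_mul_exp_le volume hvc.aemeasurable hβ0 2
  have htail := setLIntegral_Ioi_meas_lt_mul_exp_le volume (a := 4 * π * (1 + 1 / h1NormSq v))
      hβ0 hgap zero_le_two fun t ht => by
    convert volume_lt_abs_le_of_zygmund hZ hv hE0 (by linarith) (by nlinarith) using 3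
    ring
  have hsq : ∫⁻ x, ENNReal.ofReal (v x ^ 2) = ENNReal.ofReal k := by
    rw [← hv2, ofReal_integral_eq_lintegral_ofReal hv.2.1.integrable_sq
      (ae_of_all _ fun x => sq_nonneg _)]
  have hlint : ∫⁻ x, ENNReal.ofReal (exp (β * v x ^ 2) - 1) ≤
      ENNReal.ofReal (8 * π * exp (20 * π) / k) := by
    rw [lintegral_ofReal_exp_mul_sq_sub_one_eq_lintegral_meas_lt_mul volume hvc.aemeasurable hβ0,
      ← Ioc_union_Ioi_eq_Ioi zero_le_two,
      lintegral_union measurableSet_Ioi (Ioc_disjoint_Ioi le_rfl)]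
    refine (add_le_add hnear htail).trans ?_
    rw [hsq, ← ENNReal.ofReal_mul (by positivity), ← ENNReal.ofReal_add (by positivity)
      (div_nonneg (by positivity) (sub_pos.2 hgap).le)]
    exact ENNReal.ofReal_le_ofReal (near_add_tail_le hk hβ0 hβ hE0 hE1)
  have hnonneg : 0 ≤ᵐ[volume] fun x => exp (β * v x ^ 2) - 1 :=
    ae_of_all _ fun x => sub_nonneg.2 (one_le_exp (by positivity))
  rw [integral_eq_lintegral_of_nonneg_ae hnonneg (by fun_prop : Continuous fun x =>
    exp (β * v x ^ 2) - 1).aestronglyMeasurable]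
  exact ENNReal.toReal_le_of_le_ofReal (by positivity) hlint

/-- The Zygmund-type inequality implies the Adachi–Tanaka inequality with
quadratically growing constant `C/(1 − β/4π)²`. -/
theorem zygmund_implies_adachi_tanaka_quadratic
    (hZ : ∀ u : EuclideanSpace ℝ (Fin 2) → ℝ, MemH1 u →
      ∀ T : ℝ, 0 < T → ∀ t : ℝ, 0 < t → t ≤ T →
        decRearr u t ≤
          (1 / Real.sqrt (4 * π)) * Real.sqrt (4 * π / T + Real.log (T / t)) *
            Real.sqrt ((∫ x, ‖fderiv ℝ u x‖ ^ 2 ∂volume) + ∫ x, (u x) ^ 2 ∂volume)) :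
    ∃ C : ℝ, 0 < C ∧
      ∀ β : ℝ, β < 4 * π →
        ∀ u : EuclideanSpace ℝ (Fin 2) → ℝ, MemH1 u →
          (∫ x, ‖fderiv ℝ u x‖ ^ 2 ∂volume) ≤ 1 →
          ∫ x, (Real.exp (β * (u x) ^ 2) - 1) ∂volume ≤
            (C / (1 - β / (4 * π)) ^ 2) * ∫ x, (u x) ^ 2 ∂volume := by
  refine ⟨128 * π * exp (20 * π), by positivity, fun β hβ u hu hD => ?_⟩
  have hL : 0 ≤ ∫ x, u x ^ 2 := integral_nonneg fun x => sq_nonneg _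
  rcases le_or_gt β 0 with hβ0 | hβ0
  · exact (integral_nonpos fun x => sub_nonpos.2 (exp_le_one_iff.2
      (mul_nonpos_of_nonpos_of_nonneg hβ0 (sq_nonneg _)))).trans (by positivity)
  rcases hL.eq_or_lt with hL0 | hL0
  · have hu0 : (fun x => u x ^ 2) =ᵐ[volume] 0 :=
      (integral_eq_zero_iff_of_nonneg (fun x => sq_nonneg _) hu.2.1.integrable_sq).1 hL0.symm
    rw [integral_eq_zero_of_ae (hu0.mono fun x (hx : u x ^ 2 = 0) => by simp [hx]), ← hL0,
      mul_zero]
  obtain ⟨k, rfl⟩ : ∃ k, β = 4 * π * (1 - 4 * k) := ⟨(1 - β / (4 * π)) / 4, by field_simp; ring⟩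
  have hk : 0 < k := by nlinarith [pi_pos]
  obtain ⟨c, hc, hc2⟩ : ∃ c : ℝ, 0 < c ∧ c ^ 2 = (∫ x, u x ^ 2) / k :=
    ⟨_, by positivity, sq_sqrt (by positivity)⟩
  have hv := integral_exp_mul_sq_sub_one_le_of_zygmund hZ (hu.comp_smul hc.ne')
    (by rwa [integral_norm_fderiv_comp_smul_sq u hc.ne']) hk
    (by rw [integral_comp_smul_eq_inv_sq_mul (fun y => u y ^ 2), hc2]; field_simp) hβ0.le le_rfl
  rw [integral_comp_smul_eq_inv_sq_mul (fun y => exp (4 * π * (1 - 4 * k) * u y ^ 2) - 1), hc2,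
    inv_mul_le_iff₀ (by positivity)] at hv
  refine hv.trans_eq ?_
  rw [show 1 - 4 * π * (1 - 4 * k) / (4 * π) = 4 * k by field_simp; ring]
  field_simp
  ring
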